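/- (First-order condition for the capped orthogonal loss.) Let S > 0. Suppose Y, T̆ : Ω → ℝ are random variables and r_o, t_o, t̆_o : E → ℝ are bounded measurable functions with E[Y | X] = r_o(X)·t_o(X) almost surely, E[T̆ | X] = t̆_o(X) almost surely, |r_o(x)| ≤ S and |t̆_o(x)| ≤ 1 for all x ∈ E. Then for every square-integrable measurable r : E → ℝ (with all expectations below finite), | E[ 2·(Y − (T̆ − t̆_o(X))·r_o(X) − r_o(X)·t̆_o(X))·t̆_o(X)·(r(X) − r_o(X)) ] | ≤ 2S·‖t_o − t̆_o‖_{L²}·‖r − r_o‖_{L²}. -/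

import Mathlib

/-!
Expanding, the orthogonal residual `Y - (T' - t'_o(X)) r_o(X) - r_o(X) t'_o(X)` is just
`Y - r_o(X) T'`, whose conditional mean given `X` is `r_o(X) (t_o(X) - t'_o(X))`. The other factor
`2 t'_o(X) (r(X) - r_o(X))` is a function of `X`, so the residual may be replaced by its
conditional mean; the resulting integrand is `2 t'_o r_o · (t_o - t'_o) · (r - r_o)` evaluated
at `X`, and `|2 t'_o r_o| ≤ 2 S` together with Cauchy–Schwarz gives the bound.
-/

open MeasureTheory

section

variable {Ω : Type*} {m m₀ : MeasurableSpace Ω} {μ : Measure[m₀] Ω}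

theorem integral_mul_eq_integral_mul_condExp (hm : m ≤ m₀) [SigmaFinite (μ.trim hm)]
    {f g : Ω → ℝ} (hf : StronglyMeasurable[m] f) (hfg : Integrable (f * g) μ)
    (hg : Integrable g μ) :
    ∫ ω, f ω * g ω ∂μ = ∫ ω, f ω * μ[g | m] ω ∂μ := by
  rw [← integral_condExp hm]
  exact integral_congr_ae (condExp_mul_of_stronglyMeasurable_left hf hfg hg)

theorem condExp_sub_mul_of_bound (hm : m ≤ m₀) [IsFiniteMeasure μ] {Y T a : Ω → ℝ}
    (hY : Integrable Y μ) (hT : Integrable T μ) (ha : StronglyMeasurable[m] a) {C : ℝ}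
    (haC : ∀ᵐ ω ∂μ, |a ω| ≤ C) :
    μ[Y - a * T | m] =ᵐ[μ] μ[Y | m] - a * μ[T | m] := by
  have haT : Integrable (a * T) μ :=
    hT.bdd_mul (ha.mono hm).aestronglyMeasurable haC
  filter_upwards [condExp_sub hY haT m,
    condExp_stronglyMeasurable_mul_of_bound hm ha hT C haC] with ω hsub hmul
  rw [hsub, Pi.sub_apply, hmul]
  rfl

end

section

variable {Ω : Type*} [MeasurableSpace Ω] {μ : Measure Ω}

theorem integral_abs_mul_abs_le_sqrt_mul_sqrt {u v : Ω → ℝ} (hu : MemLp u 2 μ)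
    (hv : MemLp v 2 μ) :
    ∫ ω, |u ω| * |v ω| ∂μ ≤ √(∫ ω, u ω ^ 2 ∂μ) * √(∫ ω, v ω ^ 2 ∂μ) := by
  have h2 : ENNReal.ofReal 2 = 2 := by norm_num
  have := integral_mul_norm_le_Lp_mul_Lq (μ := μ) Real.HolderConjugate.two_two (h2 ▸ hu) (h2 ▸ hv)
  simpa [Real.sqrt_eq_rpow, Real.rpow_two] using this

theorem abs_integral_mul_mul_le {a u v : Ω → ℝ} {K : ℝ} (hK : 0 ≤ K)
    (haK : ∀ᵐ ω ∂μ, |a ω| ≤ K) (hu : MemLp u 2 μ) (hv : MemLp v 2 μ) :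
    |∫ ω, a ω * u ω * v ω ∂μ| ≤ K * √(∫ ω, u ω ^ 2 ∂μ) * √(∫ ω, v ω ^ 2 ∂μ) := by
  have huv : Integrable (fun ω => |u ω| * |v ω|) μ := hu.abs.integrable_mul hv.abs
  calc |∫ ω, a ω * u ω * v ω ∂μ| ≤ ∫ ω, |a ω * u ω * v ω| ∂μ := abs_integral_le_integral_abs
    _ ≤ ∫ ω, K * (|u ω| * |v ω|) ∂μ := by
      refine integral_mono_of_nonneg (.of_forall fun ω => abs_nonneg _) (huv.const_mul K) ?_
      filter_upwards [haK] with ω hω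
      rw [abs_mul, abs_mul, mul_assoc]
      exact mul_le_mul_of_nonneg_right hω (by positivity)
    _ = K * ∫ ω, |u ω| * |v ω| ∂μ := integral_const_mul K _
    _ ≤ K * √(∫ ω, u ω ^ 2 ∂μ) * √(∫ ω, v ω ^ 2 ∂μ) := by
      rw [mul_assoc]
      exact mul_le_mul_of_nonneg_left (integral_abs_mul_abs_le_sqrt_mul_sqrt hu hv) hK

end

theorem first_order_condition_capped_loss_general
    {Ω : Type*} [MeasurableSpace Ω] {μ : Measure Ω} [IsProbabilityMeasure μ]
    {E : Type*} [mE : MeasurableSpace E] (X : Ω → E) (hX : Measurable X)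
    (S : ℝ) (hS : 0 < S)
    (Y T' : Ω → ℝ)
    (hYint : Integrable Y μ) (hT'int : Integrable T' μ)
    (r_o t_o t'_o : E → ℝ)
    (hro : Measurable r_o) (hto : Measurable t_o) (ht'o : Measurable t'_o)
    (hroB : ∀ x, |r_o x| ≤ S) (ht'oB : ∀ x, |t'_o x| ≤ 1)
    (htoB : ∃ C, ∀ x, |t_o x| ≤ C)
    (hYcond : μ[Y | MeasurableSpace.comap X mE] =ᵐ[μ] fun ω => r_o (X ω) * t_o (X ω))
    (hT'cond : μ[T' | MeasurableSpace.comap X mE] =ᵐ[μ] fun ω => t'_o (X ω))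
    (r : E → ℝ) (hr : Measurable r)
    (hr2 : Integrable (fun ω => (r (X ω)) ^ 2) μ)
    (hint : Integrable (fun ω =>
      2 * (Y ω - (T' ω - t'_o (X ω)) * r_o (X ω) - r_o (X ω) * t'_o (X ω)) * t'_o (X ω) *
        (r (X ω) - r_o (X ω))) μ) :
    |∫ ω, 2 * (Y ω - (T' ω - t'_o (X ω)) * r_o (X ω) - r_o (X ω) * t'_o (X ω)) * t'_o (X ω) *
        (r (X ω) - r_o (X ω)) ∂μ|
      ≤ 2 * S * Real.sqrt (∫ ω, (t_o (X ω) - t'_o (X ω)) ^ 2 ∂μ) *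
        Real.sqrt (∫ ω, (r (X ω) - r_o (X ω)) ^ 2 ∂μ) := by
  obtain ⟨C, hC⟩ := htoB
  have hm : MeasurableSpace.comap X mE ≤ _ := hX.comap_le
  have hXm : Measurable[MeasurableSpace.comap X mE] X := comap_measurable X
  let f : Ω → ℝ := fun ω => 2 * t'_o (X ω) * (r (X ω) - r_o (X ω))
  let g : Ω → ℝ := fun ω => Y ω - r_o (X ω) * T' ω
  have hfg : (fun ω => 2 * (Y ω - (T' ω - t'_o (X ω)) * r_o (X ω) - r_o (X ω) * t'_o (X ω)) *
      t'_o (X ω) * (r (X ω) - r_o (X ω))) = f * g := by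
    ext ω; simp only [f, g, Pi.mul_apply]; ring
  have hf : StronglyMeasurable[MeasurableSpace.comap X mE] f :=
    (measurable_const.mul (ht'o.comp hXm) |>.mul
      ((hr.comp hXm).sub (hro.comp hXm))).stronglyMeasurable
  have hroX : StronglyMeasurable[MeasurableSpace.comap X mE] (r_o ∘ X) :=
    (hro.comp hXm).stronglyMeasurable
  have hroX_le : ∀ᵐ ω ∂μ, |r_o (X ω)| ≤ S := .of_forall fun ω => hroB (X ω)
  have hg : Integrable g μ :=
    hYint.sub (hT'int.bdd_mul (hroX.mono hm).aestronglyMeasurable hroX_le)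
  have hcond : μ[g | MeasurableSpace.comap X mE] =ᵐ[μ]
      fun ω => r_o (X ω) * (t_o (X ω) - t'_o (X ω)) := by
    filter_upwards [condExp_sub_mul_of_bound hm hYint hT'int hroX hroX_le, hYcond,
      hT'cond] with ω h hYω hTω
    rw [show g = Y - (r_o ∘ X) * T' from rfl, h, Pi.sub_apply, Pi.mul_apply, hYω, hTω,
      Function.comp_apply]
    ring
  have hu : MemLp (fun ω => t_o (X ω) - t'_o (X ω)) 2 μ :=
    MemLp.of_bound ((hto.comp hX).sub (ht'o.comp hX)).aestronglyMeasurable (C + 1)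
      (.of_forall fun ω => (abs_sub _ _).trans (add_le_add (hC (X ω)) (ht'oB (X ω))))
  have hv : MemLp (fun ω => r (X ω) - r_o (X ω)) 2 μ :=
    ((memLp_two_iff_integrable_sq (hr.comp hX).aestronglyMeasurable).2 hr2).sub
      (MemLp.of_bound (hro.comp hX).aestronglyMeasurable S hroX_le)
  have hbound : ∀ x, |2 * t'_o x * r_o x| ≤ 2 * S := fun x => by
    rw [abs_mul, abs_mul, abs_two]
    nlinarith [mul_le_mul (ht'oB x) (hroB x) (abs_nonneg _) zero_le_one]
  calc _ = |∫ ω, f ω * g ω ∂μ| := by rw [hfg]; rfl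
    _ = |∫ ω, f ω * (r_o (X ω) * (t_o (X ω) - t'_o (X ω))) ∂μ| := by
      rw [integral_mul_eq_integral_mul_condExp hm hf (hfg ▸ hint) hg]
      exact congrArg _ (integral_congr_ae (hcond.mono fun ω h => congrArg (f ω * ·) h))
    _ = |∫ ω, 2 * t'_o (X ω) * r_o (X ω) * (t_o (X ω) - t'_o (X ω)) *
          (r (X ω) - r_o (X ω)) ∂μ| := by
      congr 2; ext ω; simp only [f]; ring
    _ ≤ _ := abs_integral_mul_mul_le (by linarith) (.of_forall fun ω => hbound (X ω)) hu hv

/-- **First-order condition for the capped orthogonal loss.**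
With `E[Y | X] = r_o(X) t_o(X)` a.s., `E[T̆ | X] = t̆_o(X)` a.s., `|r_o| ≤ S` and `|t̆_o| ≤ 1`,
the directional derivative of the capped orthogonal loss at the truth is bounded by
`2 S ‖t_o - t̆_o‖_{L²} ‖r - r_o‖_{L²}`, where `‖f‖_{L²} = (E[f(X)²])^{1/2}`. -/
theorem first_order_condition_capped_loss
    {Ω : Type*} [MeasurableSpace Ω] {μ : Measure Ω} [IsProbabilityMeasure μ]
    {E : Type*} [mE : MeasurableSpace E] (X : Ω → E) (hX : Measurable X)
    (S : ℝ) (hS : 0 < S)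
    (Y T' : Ω → ℝ) (hY : Measurable Y) (hT' : Measurable T')
    (hYint : Integrable Y μ) (hT'int : Integrable T' μ)
    (r_o t_o t'_o : E → ℝ)
    (hro : Measurable r_o) (hto : Measurable t_o) (ht'o : Measurable t'_o)
    (hroB : ∀ x, |r_o x| ≤ S) (ht'oB : ∀ x, |t'_o x| ≤ 1)
    (htoB : ∃ C, ∀ x, |t_o x| ≤ C)
    (hYcond : μ[Y | MeasurableSpace.comap X mE] =ᵐ[μ] fun ω => r_o (X ω) * t_o (X ω))
    (hT'cond : μ[T' | MeasurableSpace.comap X mE] =ᵐ[μ] fun ω => t'_o (X ω))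
    (r : E → ℝ) (hr : Measurable r)
    (hr2 : Integrable (fun ω => (r (X ω)) ^ 2) μ)
    (hint : Integrable (fun ω =>
      2 * (Y ω - (T' ω - t'_o (X ω)) * r_o (X ω) - r_o (X ω) * t'_o (X ω)) * t'_o (X ω) *
        (r (X ω) - r_o (X ω))) μ) :
    |∫ ω, 2 * (Y ω - (T' ω - t'_o (X ω)) * r_o (X ω) - r_o (X ω) * t'_o (X ω)) * t'_o (X ω) *
        (r (X ω) - r_o (X ω)) ∂μ|
      ≤ 2 * S * Real.sqrt (∫ ω, (t_o (X ω) - t'_o (X ω)) ^ 2 ∂μ) *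
        Real.sqrt (∫ ω, (r (X ω) - r_o (X ω)) ^ 2 ∂μ) :=
  first_order_condition_capped_loss_general (mE := mE) X hX S hS Y T' hYint hT'int r_o t_o t'_o hro
    hto ht'o hroB ht'oB htoB hYcond hT'cond r hr hr2 hint
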